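/- arXiv:1911.08244 — 6 statements merged into one kernel-verified Lean document; each statement's English description precedes it below -/
import Mathlib

section
/- Let f:[0,1]²→ℝ be bounded, symmetric, measurable with f > 0 almost everywhere, and suppose the associated integral operator I_f on L²[0,1] is self-adjoint, non-negative definite, of finite rank k ≥ 2 with eigenvalues θ₁ ≥ θ₂ ≥ … ≥ θ_k > 0 (counted with multiplicity). Then θ₁ > θ₂, i.e., the largest eigenvalue is simple. -/
open MeasureTheory Set
private lemma integrable_of_bound {α : Type*} [MeasurableSpace α] (ν : Measure α)
    [IsFiniteMeasure ν] (g : α → ℝ) (hg : Measurable g) (C : ℝ)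
    (hC : ∀ x, |g x| ≤ C) : Integrable g ν := by
  refine (integrable_const C).mono' hg.aestronglyMeasurable ?_
  exact ae_of_all _ (fun x => by simpa using hC x)

private lemma expandQ (k : ℕ) (θ : Fin k → ℝ) (r : Fin k → ℝ → ℝ) (f : ℝ → ℝ → ℝ)
    (hmeas : ∀ i, Measurable (r i)) (M : ℝ) (hbdd : ∀ i x, |r i x| ≤ M)
    (hf : ∀ x y, f x y = ∑ i, θ i * r i x * r i y)
    (μ : Measure ℝ) [IsFiniteMeasure μ]
    (g : ℝ → ℝ) (hg : Measurable g) (C : ℝ) (hC : ∀ x, |g x| ≤ C) :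
    ∫ p, f p.1 p.2 * g p.1 * g p.2 ∂(μ.prod μ)
      = ∑ i, θ i * (∫ x, r i x * g x ∂μ)^2 := by
  have h1 : ∀ p : ℝ × ℝ, f p.1 p.2 * g p.1 * g p.2
      = ∑ i, (θ i * (r i p.1 * g p.1)) * (r i p.2 * g p.2) := by
    intro p; rw [hf, Finset.sum_mul, Finset.sum_mul]
    exact Finset.sum_congr rfl (fun i _ => by ring)
  simp only [h1]
  rw [integral_finset_sum]
  · refine Finset.sum_congr rfl (fun i _ => ?_)
    have h2 := integral_prod_mul (μ := μ) (ν := μ) (f := fun x => θ i * (r i x * g x))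
      (g := fun y => r i y * g y)
    rw [h2, integral_const_mul]
    ring
  · intro i _
    refine integrable_of_bound _ _ ?_ (|θ i| * (M*C) * (M*C)) (fun p => ?_)
    · exact (((hmeas i).comp measurable_fst).mul (hg.comp measurable_fst)).const_mul (θ i) |>.mul
        (((hmeas i).comp measurable_snd).mul (hg.comp measurable_snd))
    · have h0 : (0:ℝ) ≤ M := le_trans (abs_nonneg _) (hbdd i p.1)
      have h0C : (0:ℝ) ≤ C := le_trans (abs_nonneg _) (hC p.1)
      rw [abs_mul, abs_mul, abs_mul, abs_mul]
      gcongr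
      · exact hbdd i p.1
      · exact hC p.1
      · exact hbdd i p.2
      · exact hC p.2
private lemma bessel (k : ℕ) (r : Fin k → ℝ → ℝ)
    (hmeas : ∀ i, Measurable (r i)) (M : ℝ) (hbdd : ∀ i x, |r i x| ≤ M)
    (μ : Measure ℝ) [IsFiniteMeasure μ]
    (horth : ∀ i j, (∫ x, r i x * r j x ∂μ) = if i = j then 1 else 0)
    (g : ℝ → ℝ) (hg : Measurable g) (C : ℝ) (hC : ∀ x, |g x| ≤ C) :
    ∑ i, (∫ x, r i x * g x ∂μ)^2 ≤ ∫ x, (g x)^2 ∂μ := by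
  set c : Fin k → ℝ := fun i => ∫ x, r i x * g x ∂μ with hc
  have hints : ∀ (u v : ℝ → ℝ), Measurable u → Measurable v → (∃ A, ∀ x, |u x| ≤ A) →
      (∃ B, ∀ x, |v x| ≤ B) → Integrable (fun x => u x * v x) μ := by
    rintro u v hu hv ⟨A, hA⟩ ⟨B, hB⟩
    refine integrable_of_bound _ _ (hu.mul hv) (A * B) (fun x => ?_)
    rw [abs_mul]
    have := (abs_nonneg (u x)).trans (hA x)
    have := (abs_nonneg (v x)).trans (hB x)
    gcongr
    exacts [hA x, hB x]
  -- integrability pieces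
  have Ig2 : Integrable (fun x => g x ^ 2) μ := by
    refine integrable_of_bound _ _ (hg.pow_const 2) (C^2) (fun x => ?_)
    rw [abs_pow]
    exact pow_le_pow_left₀ (abs_nonneg _) (hC x) 2
  have Irg : ∀ i j : Fin k, Integrable (fun x => r i x * r j x) μ := fun i j =>
    hints _ _ (hmeas i) (hmeas j) ⟨M, hbdd i⟩ ⟨M, hbdd j⟩
  have Irg' : ∀ i : Fin k, Integrable (fun x => r i x * g x) μ := fun i =>
    hints _ _ (hmeas i) hg ⟨M, hbdd i⟩ ⟨C, hC⟩
  have I2 : Integrable (fun x => ∑ i, (2 * c i) * (r i x * g x)) μ :=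
    integrable_finset_sum _ (fun i _ => (Irg' i).const_mul _)
  have I3 : Integrable (fun x => ∑ i, ∑ j, (c i * c j) * (r i x * r j x)) μ :=
    integrable_finset_sum _ (fun i _ => integrable_finset_sum _ (fun j _ => (Irg i j).const_mul _))
  have key : ∫ x, (g x - ∑ i, c i * r i x)^2 ∂μ = (∫ x, (g x)^2 ∂μ) - ∑ i, (c i)^2 := by
    have hpt : ∀ x, (g x - ∑ i, c i * r i x)^2
        = g x ^ 2 - (∑ i, (2 * c i) * (r i x * g x)) + ∑ i, ∑ j, (c i * c j) * (r i x * r j x) := by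
      intro x
      have e1 : ∑ i, (2 * c i) * (r i x * g x) = 2 * g x * ∑ i, c i * r i x := by
        rw [Finset.mul_sum]; exact Finset.sum_congr rfl fun i _ => by ring
      have e2 : ∑ i, ∑ j, (c i * c j) * (r i x * r j x)
          = (∑ i, c i * r i x) * (∑ j, c j * r j x) := by
        rw [Finset.sum_mul_sum]
        exact Finset.sum_congr rfl fun i _ => Finset.sum_congr rfl fun j _ => by ring
      rw [e1, e2]; ring
    simp only [hpt]
    have A1 : Integrable (fun x => g x ^ 2 - ∑ i, (2 * c i) * (r i x * g x)) μ := Ig2.sub I2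
    rw [integral_add A1 I3, integral_sub Ig2 I2, integral_finset_sum _
      (fun i _ => (Irg' i).const_mul _), integral_finset_sum _
      (fun i _ => integrable_finset_sum _ (fun j _ => (Irg i j).const_mul _))]
    have e3 : ∀ i : Fin k, ∫ x, (2 * c i) * (r i x * g x) ∂μ = 2 * (c i)^2 := by
      intro i; rw [integral_const_mul]; rw [hc]; ring
    have e4 : ∀ i : Fin k, (∫ x, ∑ j, (c i * c j) * (r i x * r j x) ∂μ) = (c i)^2 := by
      intro i
      rw [integral_finset_sum _ (fun j _ => (Irg i j).const_mul _)]
      have e5 : ∀ j : Fin k, ∫ x, (c i * c j) * (r i x * r j x) ∂μ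
          = (c i * c j) * (if i = j then (1:ℝ) else 0) := by
        intro j; rw [integral_const_mul, horth]
      simp only [e5, mul_ite, mul_one, mul_zero]
      simp [sq]
    simp only [e3, e4]
    rw [show ∑ x : Fin k, 2 * c x ^ 2 = 2 * ∑ x : Fin k, c x ^ 2 from (Finset.mul_sum _ _ _).symm]
    ring
  have h0 : 0 ≤ ∫ x, (g x - ∑ i, c i * r i x)^2 ∂μ :=
    integral_nonneg (fun x => sq_nonneg _)
  rw [key] at h0
  linarith
private lemma const_sign (k : ℕ) (θ : Fin k → ℝ) (r : Fin k → ℝ → ℝ) (f : ℝ → ℝ → ℝ)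
    (hmeas : ∀ i, Measurable (r i)) (M : ℝ) (hM : 0 ≤ M) (hbdd : ∀ i x, |r i x| ≤ M)
    (hf : ∀ x y, f x y = ∑ i, θ i * r i x * r i y)
    (horth : ∀ i j, (∫ x in Icc (0:ℝ) 1, r i x * r j x) = if i = j then 1 else 0)
    (hpos : ∀ᵐ p : ℝ × ℝ ∂(volume.restrict (Icc (0:ℝ) 1 ×ˢ Icc (0:ℝ) 1)), 0 < f p.1 p.2)
    (θ0 : ℝ) (hθ0 : 0 ≤ θ0) (hθle : ∀ i, θ i ≤ θ0)
    (g : ℝ → ℝ) (hg : Measurable g) (C : ℝ) (hC : ∀ x, |g x| ≤ C)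
    (c : ℝ) (hgnorm : (∫ x in Icc (0:ℝ) 1, g x ^ 2) = c)
    (hQ : ∫ p, f p.1 p.2 * g p.1 * g p.2
        ∂((volume.restrict (Icc (0:ℝ) 1)).prod (volume.restrict (Icc (0:ℝ) 1))) = θ0 * c) :
    (∀ᵐ x ∂(volume.restrict (Icc (0:ℝ) 1)), 0 ≤ g x) ∨
      (∀ᵐ x ∂(volume.restrict (Icc (0:ℝ) 1)), g x ≤ 0) := by
  set μ : Measure ℝ := volume.restrict (Icc (0:ℝ) 1) with hμ
  have hpos' : ∀ᵐ p : ℝ × ℝ ∂(μ.prod μ), 0 < f p.1 p.2 := by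
    have hpr : μ.prod μ = (volume.restrict (Icc (0:ℝ) 1 ×ˢ Icc (0:ℝ) 1)) := by
      rw [Measure.volume_eq_prod, hμ, Measure.prod_restrict]
    rw [hpr]
    exact hpos
  -- measurability and boundedness of f on the product
  have hfm : Measurable (fun p : ℝ × ℝ => f p.1 p.2) := by
    have : (fun p : ℝ × ℝ => f p.1 p.2) = fun p : ℝ × ℝ => ∑ i, θ i * r i p.1 * r i p.2 :=
      funext fun p => hf _ _
    rw [this]
    exact Finset.measurable_sum _ (fun i _ =>
      (((hmeas i).comp measurable_fst).const_mul (θ i)).mul ((hmeas i).comp measurable_snd))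
  have hfb : ∀ x y, |f x y| ≤ ∑ i, |θ i| * (M * M) := by
    intro x y
    rw [hf]
    refine (Finset.abs_sum_le_sum_abs _ _).trans (Finset.sum_le_sum fun i _ => ?_)
    rw [abs_mul, abs_mul]
    have h1 := abs_nonneg (θ i)
    have h2 := abs_nonneg (r i x)
    have h3 := abs_nonneg (r i y)
    calc |θ i| * |r i x| * |r i y| ≤ |θ i| * M * M := by
          refine mul_le_mul (mul_le_mul le_rfl (hbdd i x) h2 h1) (hbdd i y) h3 ?_
          positivity
      _ = |θ i| * (M * M) := by ring
  set B : ℝ := ∑ i, |θ i| * (M * M) with hB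
  -- integrability of the two quadratic forms over the product
  have hint2 : ∀ u : ℝ → ℝ, Measurable u → (∀ x, |u x| ≤ C) →
      Integrable (fun p : ℝ × ℝ => f p.1 p.2 * u p.1 * u p.2) (μ.prod μ) := by
    intro u hu hCu
    refine integrable_of_bound _ _ ((hfm.mul (hu.comp measurable_fst)).mul
      (hu.comp measurable_snd)) (B * C * C) (fun p => ?_)
    rw [abs_mul, abs_mul]
    have h0C : (0:ℝ) ≤ C := (abs_nonneg _).trans (hCu p.1)
    have hBnn : 0 ≤ B := by
      rw [hB]; exact Finset.sum_nonneg fun i _ => by positivity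
    refine mul_le_mul (mul_le_mul (hfb _ _) (hCu p.1) (abs_nonneg _) hBnn)
      (hCu p.2) (abs_nonneg _) (by positivity)
  have Iq : Integrable (fun p : ℝ × ℝ => f p.1 p.2 * g p.1 * g p.2) (μ.prod μ) := hint2 g hg hC
  have Iqa : Integrable (fun p : ℝ × ℝ => f p.1 p.2 * |g p.1| * |g p.2|) (μ.prod μ) :=
    hint2 (fun x => |g x|) hg.abs (fun x => by rw [abs_abs]; exact hC x)
  -- Q(|g|) ≥ Q(g)
  have hmono : ∫ p, f p.1 p.2 * g p.1 * g p.2 ∂(μ.prod μ)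
      ≤ ∫ p, f p.1 p.2 * |g p.1| * |g p.2| ∂(μ.prod μ) := by
    refine integral_mono_ae Iq Iqa ?_
    filter_upwards [hpos'] with p hp
    have : g p.1 * g p.2 ≤ |g p.1| * |g p.2| := by
      rw [← abs_mul]; exact le_abs_self _
    calc f p.1 p.2 * g p.1 * g p.2 = f p.1 p.2 * (g p.1 * g p.2) := by ring
      _ ≤ f p.1 p.2 * (|g p.1| * |g p.2|) := by
          exact mul_le_mul_of_nonneg_left this hp.le
      _ = f p.1 p.2 * |g p.1| * |g p.2| := by ring
  -- Q(|g|) ≤ θ0 * c  via expansion and Bessel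
  have hexp : ∫ p, f p.1 p.2 * |g p.1| * |g p.2| ∂(μ.prod μ)
      = ∑ i, θ i * (∫ x, r i x * |g x| ∂μ)^2 :=
    expandQ k θ r f hmeas M hbdd hf μ (fun x => |g x|) hg.abs C
      (fun x => by rw [abs_abs]; exact hC x)
  have hbes : ∑ i, (∫ x, r i x * |g x| ∂μ)^2 ≤ ∫ x, |g x| ^ 2 ∂μ :=
    bessel k r hmeas M hbdd μ horth (fun x => |g x|) hg.abs C
      (fun x => by rw [abs_abs]; exact hC x)
  have habs2 : ∫ x, |g x| ^ 2 ∂μ = c := by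
    rw [← hgnorm]; exact integral_congr_ae (ae_of_all _ fun x => by simp [sq_abs])
  have hup : ∫ p, f p.1 p.2 * |g p.1| * |g p.2| ∂(μ.prod μ) ≤ θ0 * c := by
    rw [hexp]
    calc ∑ i, θ i * (∫ x, r i x * |g x| ∂μ)^2
        ≤ ∑ i, θ0 * (∫ x, r i x * |g x| ∂μ)^2 :=
          Finset.sum_le_sum fun i _ => mul_le_mul_of_nonneg_right (hθle i) (sq_nonneg _)
      _ = θ0 * ∑ i, (∫ x, r i x * |g x| ∂μ)^2 := (Finset.mul_sum _ _ _).symm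
      _ ≤ θ0 * c := by
          rw [← habs2]
          exact mul_le_mul_of_nonneg_left hbes hθ0
  -- hence equality, and the nonnegative difference integrates to 0
  have heq : ∫ p, f p.1 p.2 * |g p.1| * |g p.2| ∂(μ.prod μ)
      = ∫ p, f p.1 p.2 * g p.1 * g p.2 ∂(μ.prod μ) := le_antisymm (hQ ▸ hup) hmono
  have hdiff0 : ∫ p, (f p.1 p.2 * |g p.1| * |g p.2| - f p.1 p.2 * g p.1 * g p.2) ∂(μ.prod μ)
      = 0 := by
    rw [integral_sub Iqa Iq, heq, sub_self]
  have hnn : 0 ≤ᵐ[μ.prod μ]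
      fun p : ℝ × ℝ => f p.1 p.2 * |g p.1| * |g p.2| - f p.1 p.2 * g p.1 * g p.2 := by
    filter_upwards [hpos'] with p hp
    have : g p.1 * g p.2 ≤ |g p.1| * |g p.2| := by
      rw [← abs_mul]; exact le_abs_self _
    have := mul_le_mul_of_nonneg_left this hp.le
    simp only [Pi.zero_apply]
    nlinarith
  have hzero : (fun p : ℝ × ℝ => f p.1 p.2 * |g p.1| * |g p.2| - f p.1 p.2 * g p.1 * g p.2)
      =ᵐ[μ.prod μ] 0 :=
    (integral_eq_zero_iff_of_nonneg_ae hnn (Iqa.sub Iq)).mp hdiff0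
  have hae : ∀ᵐ p : ℝ × ℝ ∂(μ.prod μ), |g p.1| * |g p.2| = g p.1 * g p.2 := by
    filter_upwards [hzero, hpos'] with p h1 h2
    simp only [Pi.zero_apply] at h1
    have : f p.1 p.2 * (|g p.1| * |g p.2| - g p.1 * g p.2) = 0 := by nlinarith
    rcases mul_eq_zero.mp this with h | h
    · exact absurd h h2.ne'
    · linarith
  -- product of the positive and negative parts has measure zero
  set A : Set ℝ := {x | 0 < g x} with hA
  set Bs : Set ℝ := {x | g x < 0} with hBs
  have hsub : A ×ˢ Bs ⊆ {p : ℝ × ℝ | ¬ (|g p.1| * |g p.2| = g p.1 * g p.2)} := by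
    rintro ⟨x, y⟩ ⟨hx, hy⟩
    simp only [mem_setOf_eq] at hx hy ⊢
    intro hcon
    rw [abs_of_pos hx, abs_of_neg hy] at hcon
    have hx' : 0 < g x := hx
    have hy' : g y < 0 := hy
    nlinarith [mul_pos hx' (neg_pos.mpr hy')]
  have hnull : (μ.prod μ) (A ×ˢ Bs) = 0 :=
    measure_mono_null hsub (ae_iff.mp hae)
  rw [Measure.prod_prod] at hnull
  rcases mul_eq_zero.mp hnull with h | h
  · right
    rw [ae_iff]
    simp only [not_le]
    exact h
  · left
    rw [ae_iff]
    simp only [not_le]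
    exact h
private lemma final_step (μ : Measure ℝ) [IsFiniteMeasure μ] (a b : ℝ → ℝ)
    (ha : Measurable a) (hb : Measurable b) (M : ℝ)
    (hMa : ∀ x, |a x| ≤ M) (hMb : ∀ x, |b x| ≤ M)
    (hab : (∫ x, a x * b x ∂μ) = 0)
    (haa : (∫ x, a x * a x ∂μ) = 1) (hbb : (∫ x, b x * b x ∂μ) = 1)
    (ha0 : ∀ᵐ x ∂μ, 0 ≤ a x) (hb0 : ∀ᵐ x ∂μ, 0 ≤ b x)
    (hd : (∀ᵐ x ∂μ, 0 ≤ a x - b x) ∨ (∀ᵐ x ∂μ, a x - b x ≤ 0)) : False := by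
  have Iab : Integrable (fun x => a x * b x) μ := by
    refine integrable_of_bound _ _ (ha.mul hb) (M * M) (fun x => ?_)
    rw [abs_mul]
    have h0 : (0:ℝ) ≤ M := (abs_nonneg _).trans (hMa x)
    exact mul_le_mul (hMa x) (hMb x) (abs_nonneg _) h0
  have habnn : 0 ≤ᵐ[μ] fun x => a x * b x := by
    filter_upwards [ha0, hb0] with x hx hy
    exact mul_nonneg hx hy
  have hab0 : (fun x => a x * b x) =ᵐ[μ] 0 :=
    (integral_eq_zero_iff_of_nonneg_ae habnn Iab).mp hab
  rcases hd with hd | hd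
  · -- b = 0 a.e.
    have hb0' : (fun x => b x * b x) =ᵐ[μ] 0 := by
      filter_upwards [hab0, hb0, hd] with x h1 h2 h3
      simp only [Pi.zero_apply] at h1 ⊢
      have h4 : b x ≤ a x := by linarith
      have h5 : b x * b x ≤ b x * a x := mul_le_mul_of_nonneg_left h4 h2
      have h6 : b x * a x = 0 := by rw [mul_comm]; exact h1
      exact le_antisymm (by linarith) (mul_self_nonneg _)
    have : (∫ x, b x * b x ∂μ) = 0 := by
      rw [integral_congr_ae hb0']; simp
    rw [hbb] at this; norm_num at this
  · -- a = 0 a.e.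
    have ha0' : (fun x => a x * a x) =ᵐ[μ] 0 := by
      filter_upwards [hab0, ha0, hb0, hd] with x h1 h2 h2' h3
      simp only [Pi.zero_apply] at h1 ⊢
      have h4 : a x ≤ b x := by linarith
      have h5 : a x * a x ≤ a x * b x := mul_le_mul_of_nonneg_left h4 h2
      exact le_antisymm (by linarith) (mul_self_nonneg _)
    have : (∫ x, a x * a x ∂μ) = 0 := by
      rw [integral_congr_ae ha0']; simp
    rw [haa] at this; norm_num at this
private lemma final_step2 (μ : Measure ℝ) [IsFiniteMeasure μ] (a b : ℝ → ℝ)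
    (ha : Measurable a) (hb : Measurable b) (M : ℝ)
    (hMa : ∀ x, |a x| ≤ M) (hMb : ∀ x, |b x| ≤ M)
    (hab : (∫ x, a x * b x ∂μ) = 0)
    (haa : (∫ x, a x * a x ∂μ) = 1) (hbb : (∫ x, b x * b x ∂μ) = 1)
    (hsa : (∀ᵐ x ∂μ, 0 ≤ a x) ∨ (∀ᵐ x ∂μ, a x ≤ 0))
    (hsb : (∀ᵐ x ∂μ, 0 ≤ b x) ∨ (∀ᵐ x ∂μ, b x ≤ 0))
    (hsum : (∀ᵐ x ∂μ, 0 ≤ a x + b x) ∨ (∀ᵐ x ∂μ, a x + b x ≤ 0))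
    (hdiff : (∀ᵐ x ∂μ, 0 ≤ a x - b x) ∨ (∀ᵐ x ∂μ, a x - b x ≤ 0)) : False := by
  have hMbn : ∀ x, |(-b) x| ≤ M := fun x => by simpa using hMb x
  have hMan : ∀ x, |(-a) x| ≤ M := fun x => by simpa using hMa x
  have habn : (∫ x, a x * (-b) x ∂μ) = 0 := by
    have : (fun x => a x * (-b) x) = fun x => -(a x * b x) := funext fun x => by
      simp
    rw [this, integral_neg, hab, neg_zero]
  have hanb : (∫ x, (-a) x * b x ∂μ) = 0 := by
    have : (fun x => (-a) x * b x) = fun x => -(a x * b x) := funext fun x => by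
      simp
    rw [this, integral_neg, hab, neg_zero]
  have hanbn : (∫ x, (-a) x * (-b) x ∂μ) = 0 := by
    have : (fun x => (-a) x * (-b) x) = fun x => a x * b x := funext fun x => by
      simp
    rw [this, hab]
  have hbnbn : (∫ x, (-b) x * (-b) x ∂μ) = 1 := by
    have : (fun x => (-b) x * (-b) x) = fun x => b x * b x := funext fun x => by simp
    rw [this, hbb]
  have hanan : (∫ x, (-a) x * (-a) x ∂μ) = 1 := by
    have : (fun x => (-a) x * (-a) x) = fun x => a x * a x := funext fun x => by simp
    rw [this, haa]
  rcases hsa with ha0 | ha0 <;> rcases hsb with hb0 | hb0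
  · exact final_step μ a b ha hb M hMa hMb hab haa hbb ha0 hb0 hdiff
  · refine final_step μ a (-b) ha hb.neg M hMa hMbn habn haa hbnbn ha0 ?_ ?_
    · filter_upwards [hb0] with x hx; simp; linarith
    · refine hsum.imp (fun h => ?_) (fun h => ?_)
      · filter_upwards [h] with x hx; simp; linarith
      · filter_upwards [h] with x hx; simp; linarith
  · refine final_step μ (-a) b ha.neg hb M hMan hMb hanb hanan hbb ?_ hb0 ?_
    · filter_upwards [ha0] with x hx; simp; linarith
    · refine hsum.symm.imp (fun h => ?_) (fun h => ?_)
      · filter_upwards [h] with x hx; simp; linarith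
      · filter_upwards [h] with x hx; simp; linarith
  · refine final_step μ (-a) (-b) ha.neg hb.neg M hMan hMbn hanbn hanan hbnbn ?_ ?_ ?_
    · filter_upwards [ha0] with x hx; simp; linarith
    · filter_upwards [hb0] with x hx; simp; linarith
    · refine hdiff.symm.imp (fun h => ?_) (fun h => ?_)
      · filter_upwards [h] with x hx; simp; linarith
      · filter_upwards [h] with x hx; simp; linarith

theorem stmt2 (k : ℕ) (hk : 2 ≤ k) (θ : Fin k → ℝ) (r : Fin k → ℝ → ℝ) (f : ℝ → ℝ → ℝ)
    (hθpos : ∀ i, 0 < θ i) (hθmono : ∀ i j : Fin k, i ≤ j → θ j ≤ θ i)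
    (hmeas : ∀ i, Measurable (r i))
    (M : ℝ) (hbdd : ∀ i x, |r i x| ≤ M)
    (horth : ∀ i j, (∫ x in Icc (0:ℝ) 1, r i x * r j x) = if i = j then 1 else 0)
    (hf : ∀ x y, f x y = ∑ i, θ i * r i x * r i y)
    (hpos : ∀ᵐ p : ℝ × ℝ ∂(volume.restrict (Icc (0:ℝ) 1 ×ˢ Icc (0:ℝ) 1)), 0 < f p.1 p.2) :
    θ ⟨1, by omega⟩ < θ ⟨0, by omega⟩ := by
  by_contra hcon
  set μ : Measure ℝ := volume.restrict (Icc (0:ℝ) 1) with hμ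
  set i0 : Fin k := ⟨0, by omega⟩ with hi0
  set i1 : Fin k := ⟨1, by omega⟩ with hi1
  have hne : i0 ≠ i1 := by
    rw [hi0, hi1]
    simp [Fin.ext_iff]
  have hcon' : θ i0 ≤ θ i1 := not_lt.mp hcon
  have hle : i0 ≤ i1 := by rw [hi0, hi1]; exact Fin.mk_le_mk.mpr (by omega)
  have heq : θ i1 = θ i0 := le_antisymm (hθmono i0 i1 hle) hcon'
  have hθle : ∀ i, θ i ≤ θ i0 := fun i => hθmono i0 i (by
    rw [hi0, Fin.le_def]
    simp)
  have hM0 : 0 ≤ M := (abs_nonneg _).trans (hbdd i0 0)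
  have hθ00 : 0 ≤ θ i0 := (hθpos i0).le
  have Irr : ∀ i j : Fin k, Integrable (fun x => r i x * r j x) μ := by
    intro i j
    refine integrable_of_bound _ _ ((hmeas i).mul (hmeas j)) (M * M) (fun x => ?_)
    rw [abs_mul]
    exact mul_le_mul (hbdd i x) (hbdd j x) (abs_nonneg _) hM0
  -- coefficient computations
  have hca : ∀ i, (∫ x, r i x * r i0 x ∂μ) = if i = i0 then (1:ℝ) else 0 := fun i => horth i i0
  have hcb : ∀ i, (∫ x, r i x * r i1 x ∂μ) = if i = i1 then (1:ℝ) else 0 := fun i => horth i i1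
  have hcsum : ∀ i, (∫ x, r i x * (r i0 x + r i1 x) ∂μ)
      = (if i = i0 then (1:ℝ) else 0) + (if i = i1 then 1 else 0) := by
    intro i
    have e : (fun x => r i x * (r i0 x + r i1 x))
        = fun x => r i x * r i0 x + r i x * r i1 x := funext fun x => by ring
    rw [e, integral_add (Irr i i0) (Irr i i1), horth, horth]
  have hcdiff : ∀ i, (∫ x, r i x * (r i0 x - r i1 x) ∂μ)
      = (if i = i0 then (1:ℝ) else 0) - (if i = i1 then 1 else 0) := by
    intro i
    have e : (fun x => r i x * (r i0 x - r i1 x))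
        = fun x => r i x * r i0 x - r i x * r i1 x := funext fun x => by ring
    rw [e, integral_sub (Irr i i0) (Irr i i1), horth, horth]
  -- sum evaluations
  have S1 : ∀ j : Fin k, ∑ i, θ i * ((if i = j then (1:ℝ) else 0))^2 = θ j := by
    intro j
    have hci : ∀ i : Fin k, θ i * ((if i = j then (1:ℝ) else 0))^2
        = if i = j then θ j else 0 := by
      intro i
      by_cases h : i = j <;> simp [h]
    rw [Finset.sum_congr rfl (fun i _ => hci i)]
    simp
  have S2 : ∑ i, θ i * ((if i = i0 then (1:ℝ) else 0) + (if i = i1 then 1 else 0))^2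
      = θ i0 + θ i1 := by
    have hci : ∀ i : Fin k, θ i * ((if i = i0 then (1:ℝ) else 0) + (if i = i1 then 1 else 0))^2
        = (if i = i0 then θ i0 else 0) + (if i = i1 then θ i1 else 0) := by
      intro i
      by_cases h : i = i0 <;> by_cases h' : i = i1
      · exact absurd (h.symm.trans h') hne
      · simp [h, h', hne, hne.symm]
      · simp [h, h', hne, hne.symm]
      · simp [h, h', hne, hne.symm]
    rw [Finset.sum_congr rfl (fun i _ => hci i), Finset.sum_add_distrib]
    simp
  have S3 : ∑ i, θ i * ((if i = i0 then (1:ℝ) else 0) - (if i = i1 then 1 else 0))^2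
      = θ i0 + θ i1 := by
    have hci : ∀ i : Fin k, θ i * ((if i = i0 then (1:ℝ) else 0) - (if i = i1 then 1 else 0))^2
        = (if i = i0 then θ i0 else 0) + (if i = i1 then θ i1 else 0) := by
      intro i
      by_cases h : i = i0 <;> by_cases h' : i = i1
      · exact absurd (h.symm.trans h') hne
      · simp [h, h', hne, hne.symm]
      · simp [h, h', hne, hne.symm]
      · simp [h, h', hne, hne.symm]
    rw [Finset.sum_congr rfl (fun i _ => hci i), Finset.sum_add_distrib]
    simp
  -- norms
  have hsq : ∀ j : Fin k, (∫ x, (r j x)^2 ∂μ) = 1 := by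
    intro j
    have e : (fun x => (r j x)^2) = fun x => r j x * r j x := funext fun x => by ring
    rw [e, horth]
    simp
  have hnorm_sum : (∫ x, (r i0 x + r i1 x)^2 ∂μ) = 2 := by
    have e : (fun x => (r i0 x + r i1 x)^2)
        = fun x => (r i0 x * r i0 x + 2 * (r i0 x * r i1 x)) + r i1 x * r i1 x :=
      funext fun x => by ring
    have IA : Integrable (fun x => r i0 x * r i0 x + 2 * (r i0 x * r i1 x)) μ :=
      (Irr i0 i0).add ((Irr i0 i1).const_mul 2)
    rw [e, integral_add IA (Irr i1 i1), integral_add (Irr i0 i0) ((Irr i0 i1).const_mul 2),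
      integral_const_mul, horth, horth, horth]
    simp [hne]
    norm_num
  have hnorm_diff : (∫ x, (r i0 x - r i1 x)^2 ∂μ) = 2 := by
    have e : (fun x => (r i0 x - r i1 x)^2)
        = fun x => (r i0 x * r i0 x - 2 * (r i0 x * r i1 x)) + r i1 x * r i1 x :=
      funext fun x => by ring
    have IA : Integrable (fun x => r i0 x * r i0 x - 2 * (r i0 x * r i1 x)) μ :=
      (Irr i0 i0).sub ((Irr i0 i1).const_mul 2)
    rw [e, integral_add IA (Irr i1 i1), integral_sub (Irr i0 i0) ((Irr i0 i1).const_mul 2),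
      integral_const_mul, horth, horth, horth]
    simp [hne]
    norm_num
  -- quadratic form values
  have hQa : ∫ p, f p.1 p.2 * r i0 p.1 * r i0 p.2 ∂(μ.prod μ) = θ i0 * 1 := by
    rw [expandQ k θ r f hmeas M hbdd hf μ (r i0) (hmeas i0) M (hbdd i0)]
    simp only [hca]
    rw [S1 i0]; ring
  have hQb : ∫ p, f p.1 p.2 * r i1 p.1 * r i1 p.2 ∂(μ.prod μ) = θ i0 * 1 := by
    rw [expandQ k θ r f hmeas M hbdd hf μ (r i1) (hmeas i1) M (hbdd i1)]
    simp only [hcb]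
    rw [S1 i1, heq]; ring
  have hQsum : ∫ p, f p.1 p.2 * (r i0 p.1 + r i1 p.1) * (r i0 p.2 + r i1 p.2) ∂(μ.prod μ)
      = θ i0 * 2 := by
    rw [expandQ k θ r f hmeas M hbdd hf μ (fun x => r i0 x + r i1 x)
      ((hmeas i0).add (hmeas i1)) (M + M)
      (fun x => (abs_add_le _ _).trans (add_le_add (hbdd i0 x) (hbdd i1 x)))]
    simp only [hcsum]
    rw [S2, heq]; ring
  have hQdiff : ∫ p, f p.1 p.2 * (r i0 p.1 - r i1 p.1) * (r i0 p.2 - r i1 p.2) ∂(μ.prod μ)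
      = θ i0 * 2 := by
    rw [expandQ k θ r f hmeas M hbdd hf μ (fun x => r i0 x - r i1 x)
      ((hmeas i0).sub (hmeas i1)) (M + M)
      (fun x => (abs_sub _ _).trans (add_le_add (hbdd i0 x) (hbdd i1 x)))]
    simp only [hcdiff]
    rw [S3, heq]; ring
  -- constant signs
  have hsa := const_sign k θ r f hmeas M hM0 hbdd hf horth hpos (θ i0) hθ00 hθle
    (r i0) (hmeas i0) M (hbdd i0) 1 (hsq i0) hQa
  have hsb := const_sign k θ r f hmeas M hM0 hbdd hf horth hpos (θ i0) hθ00 hθle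
    (r i1) (hmeas i1) M (hbdd i1) 1 (hsq i1) hQb
  have hssum := const_sign k θ r f hmeas M hM0 hbdd hf horth hpos (θ i0) hθ00 hθle
    (fun x => r i0 x + r i1 x) ((hmeas i0).add (hmeas i1)) (M + M)
    (fun x => (abs_add_le _ _).trans (add_le_add (hbdd i0 x) (hbdd i1 x))) 2 hnorm_sum hQsum
  have hsdiff := const_sign k θ r f hmeas M hM0 hbdd hf horth hpos (θ i0) hθ00 hθle
    (fun x => r i0 x - r i1 x) ((hmeas i0).sub (hmeas i1)) (M + M)
    (fun x => (abs_sub _ _).trans (add_le_add (hbdd i0 x) (hbdd i1 x))) 2 hnorm_diff hQdiff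
  -- conclude
  have hab01 : (∫ x, r i0 x * r i1 x ∂μ) = 0 := by rw [horth]; simp [hne]
  have haa : (∫ x, r i0 x * r i0 x ∂μ) = 1 := by rw [horth]; simp
  have hbb : (∫ x, r i1 x * r i1 x ∂μ) = 1 := by rw [horth]; simp
  exact final_step2 μ (r i0) (r i1) (hmeas i0) (hmeas i1) M (hbdd i0) (hbdd i1)
    hab01 haa hbb hsa hsb hssum hsdiff
end

section
/- Let U be an n×n real symmetric matrix with eigenvalues λ₁(U) ≥ … ≥ λₙ(U). For 1 ≤ l ≤ n set R_l = Σ_{j ≠ l} |U(j,l)|. Suppose for some index m: U(m,m) + R_m < U(l,l) − R_l for all 1 ≤ l ≤ m−1, and U(m,m) − R_m > U(l,l) + R_l for all m+1 ≤ l ≤ n. Then the set of eigenvalues of U lying outside the union ⋃_{l ≠ m} [U(l,l) − R_l, U(l,l) + R_l] is exactly the singleton {λ_m(U)}. -/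
/-!
Every eigenvalue lies in some Gershgorin disc, so it suffices to locate the eigenvalues relative
to the isolated disc of index `m`. This is a Courant–Fischer dimension count. For symmetric `U`,
AM–GM on the off-diagonal terms gives `x ⬝ᵥ U *ᵥ x ≥ ∑ l, (U l l - R l) * x l ^ 2`, so on the
span of the coordinate vectors `e l`, `l ≤ k`, the quadratic form exceeds `c * ‖x‖ ^ 2` whenever
`c` lies below all of these discs. This `(k + 1)`-dimensional space meets the span of the
eigenvectors of `μ k, …, μ (n - 1)`, on which the form is at most `μ k * ‖x‖ ^ 2`; hence
`c < μ k`. The same argument for `-U` bounds `μ k` from above by every `c` lying above the discs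
of the indices `l ≥ k`. With the disc of `m` separated from the others, these bounds put `μ m`
outside every other disc and every other `μ i` outside the disc of `m`.
-/

open Set Polynomial Matrix

theorem Antitone.eq_of_prod_X_sub_C_eq {R : Type*} [CommRing R] [IsDomain R] [LinearOrder R]
    {n : ℕ} {μ ν : Fin n → R} (hμ : Antitone μ) (hν : Antitone ν)
    (h : ∏ i, (X - C (μ i)) = ∏ i, (X - C (ν i))) : μ = ν := by
  have hroots : ∀ f : Fin n → R, (∏ i, (X - C (f i))).roots = ↑(List.ofFn f) := fun f => by
    rw [← Fin.univ_val_map, ← roots_multiset_prod_X_sub_C (Finset.univ.val.map f),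
      Multiset.map_map]
    rfl
  have hperm : (List.ofFn μ).Perm (List.ofFn ν) := by
    rw [← Multiset.coe_eq_coe, ← hroots, ← hroots, h]
  exact List.ofFn_injective (hperm.eq_of_sortedGE hμ.sortedGE_ofFn hν.sortedGE_ofFn)

namespace Matrix

variable {ι : Type*} [Fintype ι] [DecidableEq ι]

theorem spectrum_eq_range_of_charpoly_eq {K : Type*} [Field K] {U : Matrix ι ι K} {μ : ι → K}
    (h : U.charpoly = ∏ i, (X - C (μ i))) : spectrum K U = range μ := by
  ext x
  simp only [mem_spectrum_iff_isRoot_charpoly, h, IsRoot.def, eval_prod, eval_sub, eval_X,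
    eval_C, Finset.prod_eq_zero_iff, Finset.mem_univ, true_and, sub_eq_zero, mem_range]
  exact exists_congr fun _ => eq_comm

def gershgorinRadius (U : Matrix ι ι ℝ) (l : ι) : ℝ :=
  ∑ j ∈ Finset.univ.erase l, |U j l|

theorem gershgorinRadius_nonneg (U : Matrix ι ι ℝ) (l : ι) : 0 ≤ U.gershgorinRadius l :=
  Finset.sum_nonneg fun _ _ => abs_nonneg _

@[simp]
theorem gershgorinRadius_neg (U : Matrix ι ι ℝ) : (-U).gershgorinRadius = U.gershgorinRadius := by
  ext l
  simp [gershgorinRadius]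

theorem IsSymm.exists_mem_Icc_of_mem_spectrum {U : Matrix ι ι ℝ} (hU : U.IsSymm) {x : ℝ}
    (hx : x ∈ spectrum ℝ U) :
    ∃ k, x ∈ Icc (U k k - U.gershgorinRadius k) (U k k + U.gershgorinRadius k) := by
  -- `eigenvalue_mem_ball` uses row sums; applied to `Uᵀ = U` they become the column sums.
  rw [← hU.eq, ← spectrum_toLin', ← Module.End.hasEigenvalue_iff_mem_spectrum] at hx
  obtain ⟨k, hk⟩ := eigenvalue_mem_ball hx
  exact ⟨k, by simpa [Real.closedBall_eq_Icc, gershgorinRadius] using hk⟩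

theorem IsSymm.sum_sub_gershgorinRadius_mul_sq_le {U : Matrix ι ι ℝ} (hU : U.IsSymm)
    (x : ι → ℝ) : ∑ k, (U k k - U.gershgorinRadius k) * x k ^ 2 ≤ x ⬝ᵥ U *ᵥ x := by
  have hswap : ∑ k, ∑ j ∈ Finset.univ.erase k, |U j k| * x j ^ 2
      = ∑ k, ∑ j ∈ Finset.univ.erase k, |U j k| * x k ^ 2 := by
    rw [Finset.sum_comm' (t' := Finset.univ) (s' := fun j => Finset.univ.erase j)
      (by simp [and_comm, eq_comm])]
    simp_rw [hU.apply]
  have hoff : ∀ k j, -(|U j k| * (x k ^ 2 + x j ^ 2)) / 2 ≤ x k * (U k j * x j) := fun k j => by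
    rw [← hU.apply]
    have h₁ : 0 ≤ (|U k j| + U k j) * (x k + x j) ^ 2 :=
      mul_nonneg (by linarith [neg_abs_le (U k j)]) (sq_nonneg _)
    have h₂ : 0 ≤ (|U k j| - U k j) * (x k - x j) ^ 2 :=
      mul_nonneg (by linarith [le_abs_self (U k j)]) (sq_nonneg _)
    nlinarith
  calc ∑ k, (U k k - U.gershgorinRadius k) * x k ^ 2
      = ∑ k, (U k k * x k ^ 2
          + ∑ j ∈ Finset.univ.erase k, -(|U j k| * (x k ^ 2 + x j ^ 2)) / 2) := by
        simp only [neg_div, Finset.sum_neg_distrib, mul_add, add_div, Finset.sum_add_distrib,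
          ← Finset.sum_div, hswap, gershgorinRadius, sub_mul, Finset.sum_sub_distrib,
          Finset.sum_mul]
        ring
    _ ≤ ∑ k, (U k k * x k ^ 2 + ∑ j ∈ Finset.univ.erase k, x k * (U k j * x j)) := by
        gcongr with k _ j
        exact hoff k j
    _ = x ⬝ᵥ U *ᵥ x := by
        simp only [dotProduct, mulVec, Finset.mul_sum]
        refine Finset.sum_congr rfl fun k _ => ?_
        rw [← Finset.add_sum_erase _ _ (Finset.mem_univ k)]
        ring

theorem IsSymm.mul_sum_sq_lt_dotProduct_mulVec {U : Matrix ι ι ℝ} (hU : U.IsSymm) {W : Finset ι}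
    {c : ℝ} (hW : ∀ l ∈ W, c < U l l - U.gershgorinRadius l) {x : ι → ℝ}
    (hxW : ∀ l ∉ W, x l = 0) (hx0 : x ≠ 0) : c * ∑ l, x l ^ 2 < x ⬝ᵥ U *ᵥ x := by
  obtain ⟨l₀, hl₀⟩ := Function.ne_iff.mp hx0
  have hl₀W : l₀ ∈ W := by
    by_contra h
    exact hl₀ (hxW l₀ h)
  rw [Finset.mul_sum]
  refine (Finset.sum_lt_sum (fun l _ => ?_) ⟨l₀, Finset.mem_univ _, ?_⟩).trans_le
    (hU.sum_sub_gershgorinRadius_mul_sq_le x)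
  · by_cases hl : l ∈ W
    · exact mul_le_mul_of_nonneg_right (hW l hl).le (sq_nonneg _)
    · simp [hxW l hl]
  · exact mul_lt_mul_of_pos_right (hW l₀ hl₀W) (pow_two_pos_of_ne_zero hl₀)

end Matrix

namespace OrthonormalBasis

variable {ι E : Type*} [Fintype ι] [NormedAddCommGroup E] [InnerProductSpace ℝ E]
  (b : OrthonormalBasis ι ℝ E)

theorem inner_apply_self_eq_sum {T : E →ₗ[ℝ] E} {eig : ι → ℝ} (hT : ∀ i, T (b i) = eig i • b i)
    (x : E) : inner ℝ (T x) x = ∑ i, eig i * b.repr x i ^ 2 := by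
  calc inner ℝ (T x) x = inner ℝ (T (∑ i, b.repr x i • b i)) x := by rw [b.sum_repr]
    _ = ∑ i, eig i * b.repr x i ^ 2 := by
      simp only [map_sum, map_smul, hT, sum_inner, smul_smul, real_inner_smul_left,
        ← b.repr_apply_apply]
      exact Finset.sum_congr rfl fun i _ => by ring

theorem norm_sq_eq_sum_repr_sq (x : E) : ‖x‖ ^ 2 = ∑ i, b.repr x i ^ 2 := by
  rw [← b.repr.norm_map, EuclideanSpace.norm_sq_eq]
  simp only [Real.norm_eq_abs, sq_abs]

theorem repr_eq_zero_of_mem_span_image {S : Set ι} {x : E} (hx : x ∈ Submodule.span ℝ (b '' S))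
    {i : ι} (hi : i ∉ S) : b.repr x i = 0 := by
  have hle : Submodule.span ℝ (b '' S) ≤ (ℝ ∙ b i)ᗮ := by
    rw [Submodule.span_le]
    rintro _ ⟨j, hj, rfl⟩
    exact Submodule.mem_orthogonal_singleton_iff_inner_right.mpr
      (b.orthonormal.2 fun hij => hi (hij ▸ hj))
  rw [b.repr_apply_apply]
  exact Submodule.mem_orthogonal_singleton_iff_inner_right.mp (hle hx)

theorem inner_apply_self_le_of_mem_span_image {T : E →ₗ[ℝ] E} {eig : ι → ℝ}
    (hT : ∀ i, T (b i) = eig i • b i) {S : Set ι} {c : ℝ} (hS : ∀ i ∈ S, eig i ≤ c) {x : E}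
    (hx : x ∈ Submodule.span ℝ (b '' S)) : inner ℝ (T x) x ≤ c * ‖x‖ ^ 2 := by
  rw [b.inner_apply_self_eq_sum hT, b.norm_sq_eq_sum_repr_sq, Finset.mul_sum]
  refine Finset.sum_le_sum fun i _ => ?_
  by_cases hi : i ∈ S
  · exact mul_le_mul_of_nonneg_right (hS i hi) (sq_nonneg _)
  · simp [b.repr_eq_zero_of_mem_span_image hx hi]

theorem finrank_span_image (S : Finset ι) :
    Module.finrank ℝ (Submodule.span ℝ (b '' S)) = S.card := by
  rw [Set.image_eq_range]
  exact (finrank_span_eq_card (b.orthonormal.linearIndependent.comp _ Subtype.val_injective)).trans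
    (Fintype.card_coe S)

end OrthonormalBasis

namespace Matrix

theorem IsSymm.lt_of_eigenvalues_le_of_lt_discs {ι : Type*} [Fintype ι] [DecidableEq ι]
    {U : Matrix ι ι ℝ} (hU : U.IsSymm) (b : OrthonormalBasis ι ℝ (EuclideanSpace ℝ ι))
    {eig : ι → ℝ} (hb : ∀ i, toEuclideanLin U (b i) = eig i • b i) {S W : Finset ι}
    (hcard : Fintype.card ι < S.card + W.card) {c c' : ℝ} (hS : ∀ i ∈ S, eig i ≤ c)
    (hW : ∀ l ∈ W, c' < U l l - U.gershgorinRadius l) : c' < c := by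
  let e := EuclideanSpace.basisFun ι ℝ
  obtain ⟨x, hx, hx0⟩ : ∃ x ∈ Submodule.span ℝ (b '' S) ⊓ Submodule.span ℝ (e '' W), x ≠ 0 := by
    refine Submodule.exists_mem_ne_zero_of_ne_bot fun hbot => ?_
    have := Submodule.finrank_add_finrank_le_of_disjoint (disjoint_iff.mpr hbot)
    rw [b.finrank_span_image, e.finrank_span_image, finrank_euclideanSpace] at this
    omega
  rw [Submodule.mem_inf] at hx
  have hupper := b.inner_apply_self_le_of_mem_span_image hb hS hx.1
  have hlower : c' * ‖x‖ ^ 2 < inner ℝ (toEuclideanLin U x) x := by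
    have hquad : inner ℝ (toEuclideanLin U x) x = x ⬝ᵥ U *ᵥ x := by
      simp [EuclideanSpace.inner_eq_star_dotProduct]
    have hnorm : ‖x‖ ^ 2 = ∑ l, x l ^ 2 := by simpa [e] using e.norm_sq_eq_sum_repr_sq x
    rw [hquad, hnorm]
    refine hU.mul_sum_sq_lt_dotProduct_mulVec hW (fun l hl => ?_) fun h => hx0 (by ext; simp [h])
    simpa [e] using e.repr_eq_zero_of_mem_span_image hx.2 hl
  have hpos : 0 < ‖x‖ ^ 2 := by positivity
  exact lt_of_mul_lt_mul_right (hlower.trans_le hupper) hpos.le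

variable {n : ℕ} {U : Matrix (Fin n) (Fin n) ℝ} {μ : Fin n → ℝ}
  {b : OrthonormalBasis (Fin n) ℝ (EuclideanSpace ℝ (Fin n))}

theorem IsSymm.exists_orthonormalBasis_apply_eq_smul (hU : U.IsSymm) (hμ : Antitone μ)
    (hchar : U.charpoly = ∏ i, (X - C (μ i))) :
    ∃ b : OrthonormalBasis (Fin n) ℝ (EuclideanSpace ℝ (Fin n)),
      ∀ i, toEuclideanLin U (b i) = μ i • b i := by
  have hT : (toEuclideanLin U).IsSymmetric := isSymmetric_toEuclideanLin_iff.mpr (by simpa using hU)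
  have hμT : μ = hT.eigenvalues finrank_euclideanSpace_fin := by
    refine hμ.eq_of_prod_X_sub_C_eq (hT.eigenvalues_antitone _) ?_
    have hT_char : (toEuclideanLin U).charpoly = U.charpoly :=
      Matrix.charpoly_toLin U (EuclideanSpace.basisFun _ ℝ).toBasis
    rw [← hchar, ← hT_char, hT.charpoly_eq finrank_euclideanSpace_fin]
    simp
  subst hμT
  exact ⟨hT.eigenvectorBasis _, hT.apply_eigenvectorBasis _⟩

theorem IsSymm.lt_eigenvalue_of_lt_discs (hU : U.IsSymm) (hμ : Antitone μ)
    (hb : ∀ i, toEuclideanLin U (b i) = μ i • b i) {c : ℝ} (k : Fin n)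
    (h : ∀ l ≤ k, c < U l l - U.gershgorinRadius l) : c < μ k :=
  hU.lt_of_eigenvalues_le_of_lt_discs b hb (S := Finset.Ici k) (W := Finset.Iic k)
    (by simp; omega) (fun _ hi => hμ (Finset.mem_Ici.mp hi)) fun l hl => h l (Finset.mem_Iic.mp hl)

theorem IsSymm.eigenvalue_lt_of_discs_lt (hU : U.IsSymm) (hμ : Antitone μ)
    (hb : ∀ i, toEuclideanLin U (b i) = μ i • b i) {c : ℝ} (k : Fin n)
    (h : ∀ l, k ≤ l → U l l + U.gershgorinRadius l < c) : μ k < c := by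
  have := hU.neg.lt_of_eigenvalues_le_of_lt_discs b (eig := -μ) (c' := -c) (fun i => by simp [hb])
    (S := Finset.Iic k) (W := Finset.Ici k) (by simp; omega)
    (fun _ hi => neg_le_neg (hμ (Finset.mem_Iic.mp hi)))
    fun l hl => by
      simp only [neg_apply, gershgorinRadius_neg]
      linarith [h l (Finset.mem_Ici.mp hl)]
  simpa using this

theorem IsSymm.eigenvalue_notMem_Icc_of_ne (hU : U.IsSymm) (hμ : Antitone μ)
    (hb : ∀ i, toEuclideanLin U (b i) = μ i • b i) {m : Fin n}
    (h1 : ∀ l < m, U m m + U.gershgorinRadius m < U l l - U.gershgorinRadius l)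
    (h2 : ∀ l, m < l → U l l + U.gershgorinRadius l < U m m - U.gershgorinRadius m)
    {l : Fin n} (hl : l ≠ m) :
    μ m ∉ Icc (U l l - U.gershgorinRadius l) (U l l + U.gershgorinRadius l) := by
  rintro ⟨hlo, hhi⟩
  have hRm := U.gershgorinRadius_nonneg m
  rcases hl.lt_or_gt with hl | hl
  · have := hU.eigenvalue_lt_of_discs_lt hμ hb (c := U l l - U.gershgorinRadius l) m
      fun j hj => by
        rcases hj.eq_or_lt with rfl | hj
        · exact h1 l hl
        · linarith [h1 l hl, h2 j hj]
    linarith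
  · have := hU.lt_eigenvalue_of_lt_discs hμ hb (c := U l l + U.gershgorinRadius l) m
      fun j hj => by
        rcases hj.eq_or_lt with rfl | hj
        · exact h2 l hl
        · linarith [h2 l hl, h1 j hj]
    linarith

theorem IsSymm.eigenvalue_notMem_Icc_self_of_ne (hU : U.IsSymm) (hμ : Antitone μ)
    (hb : ∀ i, toEuclideanLin U (b i) = μ i • b i) {m : Fin n}
    (h1 : ∀ l < m, U m m + U.gershgorinRadius m < U l l - U.gershgorinRadius l)
    (h2 : ∀ l, m < l → U l l + U.gershgorinRadius l < U m m - U.gershgorinRadius m)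
    {i : Fin n} (hi : i ≠ m) :
    μ i ∉ Icc (U m m - U.gershgorinRadius m) (U m m + U.gershgorinRadius m) := by
  rintro ⟨hlo, hhi⟩
  rcases hi.lt_or_gt with hi | hi
  · linarith [hU.lt_eigenvalue_of_lt_discs hμ hb i fun l hl => h1 l (hl.trans_lt hi)]
  · linarith [hU.eigenvalue_lt_of_discs_lt hμ hb i fun l hl => h2 l (hi.trans_le hl)]

end Matrix

theorem stmt3 (n : ℕ) (U : Matrix (Fin n) (Fin n) ℝ) (hU : U.IsSymm)
    (μ : Fin n → ℝ) (hμ : Antitone μ)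
    (hchar : U.charpoly = ∏ i : Fin n, (X - C (μ i)))
    (R : Fin n → ℝ) (hR : ∀ l, R l = ∑ j ∈ Finset.univ.erase l, |U j l|)
    (m : Fin n)
    (h1 : ∀ l, l < m → U m m + R m < U l l - R l)
    (h2 : ∀ l, m < l → U l l + R l < U m m - R m) :
    spectrum ℝ U \ (⋃ l, ⋃ (_ : l ≠ m), Icc (U l l - R l) (U l l + R l)) = {μ m} := by
  obtain rfl : R = U.gershgorinRadius := funext hR
  obtain ⟨b, hb⟩ := hU.exists_orthonormalBasis_apply_eq_smul hμ hchar
  have hspec : spectrum ℝ U = range μ := spectrum_eq_range_of_charpoly_eq hchar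
  ext x
  simp only [mem_sdiff, mem_iUnion, mem_singleton_iff, not_exists]
  constructor
  · rintro ⟨hx, hout⟩
    obtain ⟨k, hk⟩ := hU.exists_mem_Icc_of_mem_spectrum hx
    obtain rfl : k = m := by
      by_contra hkm
      exact hout k hkm hk
    obtain ⟨i, rfl⟩ := hspec ▸ hx
    obtain rfl : i = k := by
      by_contra hi
      exact hU.eigenvalue_notMem_Icc_self_of_ne hμ hb h1 h2 hi hk
    rfl
  · rintro rfl
    exact ⟨hspec ▸ mem_range_self m, fun l hl => hU.eigenvalue_notMem_Icc_of_ne hμ hb h1 h2 hl⟩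
end

section
/- Let U be a k×k real symmetric matrix, λ an eigenvalue of U, and fix an index i. Let Ũ be the (k−1)×(k−1) matrix obtained by deleting row i and column i of U, and let ũ ∈ ℝ^{k−1} be the i-th column of U with its i-th entry deleted. Suppose Ũ − λ·I_{k−1} is invertible. Define ṽ = −(Ũ − λ I_{k−1})^{-1} ũ and let v ∈ ℝ^k be the vector obtained by inserting the entry 1 at position i of ṽ. Then U v = λ v. -/
open Matrix


theorem stmt4 (k : ℕ) (U : Matrix (Fin (k+1)) (Fin (k+1)) ℝ) (hU : U.IsSymm)
    (lam : ℝ) (hlam : (U - lam • 1).det = 0) (i : Fin (k+1))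
    (Ut : Matrix (Fin k) (Fin k) ℝ) (hUt : Ut = U.submatrix i.succAbove i.succAbove)
    (ut : Fin k → ℝ) (hut : ut = fun j => U (i.succAbove j) i)
    (hinv : IsUnit (Ut - lam • 1).det)
    (vt : Fin k → ℝ) (hvt : vt = -((Ut - lam • 1)⁻¹.mulVec ut))
    (v : Fin (k+1) → ℝ) (hv : v = i.insertNth 1 vt) :
    U.mulVec v = lam • v := by
  set M := U - lam • (1 : Matrix (Fin (k+1)) (Fin (k+1)) ℝ) with hM
  have hMsymm : Mᵀ = M := by
    rw [hM, Matrix.transpose_sub, hU.eq, Matrix.transpose_smul, Matrix.transpose_one]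
  have hMcol : ∀ j : Fin k, M (i.succAbove j) i = ut j := by
    intro j
    simp [hM, hut, Matrix.one_apply, Fin.succAbove_ne i j]
  have hMoff : ∀ j l : Fin k,
      M (i.succAbove j) (i.succAbove l)
        = (Ut - lam • (1 : Matrix (Fin k) (Fin k) ℝ)) j l := by
    intro j l
    simp only [hM, hUt, Matrix.sub_apply, Matrix.smul_apply, Matrix.one_apply,
      Matrix.submatrix_apply, smul_eq_mul]
    congr 2
    simp [Fin.succAbove_right_injective.eq_iff]
  have key : ∀ (w : Fin (k+1) → ℝ) (j : Fin k),
      (M.mulVec w) (i.succAbove j)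
        = ut j * w i + ((Ut - lam • 1).mulVec (fun l => w (i.succAbove l))) j := by
    intro w j
    simp only [Matrix.mulVec, dotProduct]
    rw [Fin.sum_univ_succAbove (fun m => M (i.succAbove j) m * w m) i]
    congr 1
    · rw [hMcol]
    · exact Finset.sum_congr rfl fun l _ => by rw [hMoff]
  have hv_i : v i = 1 := by rw [hv, Fin.insertNth_apply_same]
  have hv_off : ∀ l, v (i.succAbove l) = vt l := by
    intro l; rw [hv, Fin.insertNth_apply_succAbove]
  have hmul : (Ut - lam • 1).mulVec vt = -ut := by
    rw [hvt, Matrix.mulVec_neg, Matrix.mulVec_mulVec, Matrix.mul_nonsing_inv _ hinv,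
      Matrix.one_mulVec]
  have hzero : ∀ j : Fin k, (M.mulVec v) (i.succAbove j) = 0 := by
    intro j
    have : (fun l => v (i.succAbove l)) = vt := funext hv_off
    rw [key, this, hmul, hv_i]
    simp
  -- nonzero kernel vector
  obtain ⟨w, hw0, hww⟩ := (Matrix.exists_mulVec_eq_zero_iff).2 hlam
  have hwi : w i ≠ 0 := by
    intro hwi
    have hker : (Ut - lam • 1).mulVec (fun l => w (i.succAbove l)) = 0 := by
      funext j
      have := key w j
      rw [hww, hwi] at this
      simpa using this.symm
    have hwt : (fun l => w (i.succAbove l)) = 0 := by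
      have := congrArg ((Ut - lam • 1)⁻¹).mulVec hker
      rwa [Matrix.mulVec_mulVec, Matrix.nonsing_inv_mul _ hinv, Matrix.one_mulVec,
        Matrix.mulVec_zero] at this
    apply hw0
    funext m
    rcases eq_or_ne m i with rfl | hm
    · exact hwi
    · obtain ⟨l, rfl⟩ := Fin.exists_succAbove_eq hm
      exact congrFun hwt l
  -- the i-th entry of M v is zero
  have hdot : w ⬝ᵥ M.mulVec v = 0 := by
    rw [Matrix.dotProduct_mulVec, ← Matrix.mulVec_transpose, hMsymm, hww,
      zero_dotProduct]
  have hci : (M.mulVec v) i = 0 := by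
    have hexp : w ⬝ᵥ M.mulVec v = w i * (M.mulVec v) i := by
      rw [dotProduct]
      rw [Fin.sum_univ_succAbove (fun m => w m * (M.mulVec v) m) i]
      simp [hzero]
    rw [hexp] at hdot
    exact (mul_eq_zero.mp hdot).resolve_left hwi
  have hMv : M.mulVec v = 0 := by
    funext m
    rcases eq_or_ne m i with rfl | hm
    · exact hci
    · obtain ⟨l, rfl⟩ := Fin.exists_succAbove_eq hm
      exact hzero l
  have : U.mulVec v - lam • v = 0 := by
    rw [← hMv, hM, Matrix.sub_mulVec, Matrix.smul_mulVec, Matrix.one_mulVec]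
  exact sub_eq_zero.mp this
end

section
/- Let U be a k×k real symmetric matrix with k ≥ 2, λ an eigenvalue of U, and fix an index i such that the matrix obtained by deleting row i and column i of U − λ I_k is invertible. Let Ū be the (k−1)×k matrix obtained by deleting row i of U − λ I_k. Then the null space of U − λ I_k equals the null space of Ū; in particular, every eigenvector of U for λ is determined by the equations of Ū, and the eigenspace of λ is one-dimensional. -/
theorem stmt5 (k : ℕ) (U : Matrix (Fin (k+1)) (Fin (k+1)) ℝ) (hU : U.IsSymm)
    (lam : ℝ) (hsing : (U - lam • 1).det = 0) (i : Fin (k+1))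
    (hinv : IsUnit ((U - lam • 1).submatrix i.succAbove i.succAbove).det)
    (Ubar : Matrix (Fin k) (Fin (k+1)) ℝ)
    (hUbar : Ubar = (U - lam • 1).submatrix i.succAbove id) :
    {x : Fin (k+1) → ℝ | (U - lam • 1).mulVec x = 0} = {x | Ubar.mulVec x = 0} ∧
    Module.finrank ℝ (LinearMap.ker (Matrix.mulVecLin (U - lam • 1))) = 1 := by
  set M := U - lam • 1 with hM
  have hsym : M.IsSymm := by
    rw [hM, Matrix.IsSymm, Matrix.transpose_sub, Matrix.transpose_smul, Matrix.transpose_one, hU.eq]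
  -- core lemma: vector killed by all rows ≠ i with i-coordinate 0 is zero
  have key : ∀ w : Fin (k+1) → ℝ, (∀ j, M.mulVec w (i.succAbove j) = 0) → w i = 0 → w = 0 := by
    intro w h1 h2
    set B := M.submatrix i.succAbove i.succAbove with hB
    have h3 : B.mulVec (w ∘ i.succAbove) = 0 := by
      funext j
      have hj := h1 j
      rw [Matrix.mulVec, dotProduct, Fin.sum_univ_succAbove
        (fun l => M (i.succAbove j) l * w l) i, h2, mul_zero, zero_add] at hj
      simpa [Matrix.mulVec, dotProduct, hB] using hj
    have h4 : w ∘ i.succAbove = 0 := by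
      have := congrArg (B⁻¹.mulVec) h3
      rwa [Matrix.mulVec_mulVec, Matrix.nonsing_inv_mul B hinv, Matrix.one_mulVec,
        Matrix.mulVec_zero] at this
    funext j
    rcases eq_or_ne j i with rfl | hji
    · exact h2
    · obtain ⟨l, hl⟩ := Fin.exists_succAbove_eq hji
      rw [← hl]
      exact congrFun h4 l
  -- existence of a nonzero kernel vector
  obtain ⟨v, hv0, hv⟩ := Matrix.exists_mulVec_eq_zero_iff.mpr hsing
  have hvi : v i ≠ 0 := by
    intro h
    exact hv0 (key v (fun j => by rw [hv]; rfl) h)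
  -- vecMul v M = 0
  have hvM : Matrix.vecMul v M = 0 := by
    have : Matrix.vecMul v M = M.mulVec v := by
      rw [← hsym.eq, Matrix.vecMul_transpose, hsym.eq]
    rw [this, hv]
  have hset : {x : Fin (k+1) → ℝ | M.mulVec x = 0} = {x | Ubar.mulVec x = 0} := by
    ext x
    simp only [Set.mem_setOf_eq, hUbar]
    constructor
    · intro hx
      funext j
      have : ((M.submatrix i.succAbove id).mulVec x) j = (M.mulVec x) (i.succAbove j) := rfl
      rw [this, hx]; rfl
    · intro hx
      have hrows : ∀ j, M.mulVec x (i.succAbove j) = 0 := by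
        intro j
        have : ((M.submatrix i.succAbove id).mulVec x) j = (M.mulVec x) (i.succAbove j) := rfl
        rw [← this, hx]; rfl
      have hdot : dotProduct v (M.mulVec x) = 0 := by
        rw [Matrix.dotProduct_mulVec, hvM, zero_dotProduct]
      rw [dotProduct, Fin.sum_univ_succAbove (fun l => v l * M.mulVec x l) i] at hdot
      simp only [hrows, mul_zero, Finset.sum_const_zero, add_zero] at hdot
      have hxi : M.mulVec x i = 0 := by
        rcases mul_eq_zero.mp hdot with h | h
        · exact absurd h hvi
        · exact h
      funext j
      rcases eq_or_ne j i with rfl | hji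
      · exact hxi
      · obtain ⟨l, hl⟩ := Fin.exists_succAbove_eq hji
        rw [← hl]
        exact hrows l
  refine ⟨hset, ?_⟩
  have hker : LinearMap.ker (Matrix.mulVecLin M) = Submodule.span ℝ {v} := by
    ext w
    rw [LinearMap.mem_ker, Matrix.mulVecLin_apply, Submodule.mem_span_singleton]
    constructor
    · intro hw
      refine ⟨w i / v i, ?_⟩
      have hz : w - (w i / v i) • v = 0 := by
        apply key
        · intro j
          have : M.mulVec (w - (w i / v i) • v) = 0 := by
            rw [Matrix.mulVec_sub, Matrix.mulVec_smul, hw, hv, smul_zero, sub_zero]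
          rw [this]; rfl
        · simp [div_mul_cancel₀ _ hvi]
      have := sub_eq_zero.mp hz
      exact this.symm
    · rintro ⟨c, rfl⟩
      rw [Matrix.mulVec_smul, hv, smul_zero]
  rw [hker]
  exact finrank_span_singleton hv0
end

section
/- (Stochastic block model spectral decomposition.) Let p be a k×k real symmetric positive definite matrix and B₁,…,B_k disjoint Borel subsets of [0,1] with Lebesgue measures β₁,…,β_k > 0. Define f(x,y) = Σ_{i,j=1}^k p(i,j) 𝟙_{Bᵢ}(x) 𝟙_{Bⱼ}(y). Let p̃ be the k×k matrix p̃(i,j) = p(i,j)·√(βᵢ βⱼ). Then the nonzero eigenvalues of the integral operator I_f on L²[0,1] (with multiplicity) are exactly the eigenvalues θ₁ ≥ … ≥ θ_k > 0 of p̃. Moreover, if p̃ = U' D U is a spectral decomposition with D = Diag(θ₁,…,θ_k) and U orthogonal, and sᵢ = βᵢ^{-1/2} 𝟙_{Bᵢ}, then the functions rⱼ = Σᵢ U(j,i) sᵢ form an orthonormal family of eigenfunctions: I_f rⱼ = θⱼ rⱼ. -/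
/-!
The kernel `f` is constant on the blocks `Bᵢ × Bⱼ`, so `I_f g` is the step function with
coefficient vector `p v`, where `vⱼ = ∫_{Bⱼ} g`. In the orthonormal basis `sᵢ = βᵢ^{-1/2} 𝟙_{Bᵢ}`
of step functions, `I_f` therefore acts as `p̃ = diag(√β) p diag(√β)`. The rows of `U` are
eigenvectors of `p̃ = Uᵀ D U`, which gives the eigenfunctions `rⱼ`. Conversely, an eigenfunction
`g` with eigenvalue `θ' ≠ 0` equals `θ'⁻¹ I_f g`, hence is a step function whose rescaled
coefficient vector is a nonzero eigenvector of `p̃`, and so `θ'` is one of the `θᵢ`.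
-/

open MeasureTheory Set Matrix Function

lemma measure_ne_top_of_measureReal_ne_zero {α : Type*} [MeasurableSpace α] {μ : Measure α}
    {s : Set α} (h : μ.real s ≠ 0) : μ s ≠ ⊤ :=
  (ENNReal.toReal_ne_zero.1 h).2

section Spectral

variable {ι K : Type*} [Fintype ι] [DecidableEq ι] [Field K] {U : Matrix ι ι K} {θ : ι → K}

lemma mulVec_row_eq_smul (hU : U * Uᵀ = 1) (j : ι) :
    (Uᵀ * diagonal θ * U) *ᵥ U j = θ j • U j := by
  have hrow : U j = Uᵀ *ᵥ Pi.single j 1 := by rw [mulVec_single_one]; rfl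
  rw [hrow, mulVec_mulVec, Matrix.mul_assoc, Matrix.mul_assoc, hU, Matrix.mul_one,
    ← mulVec_mulVec, diagonal_mulVec_single, mul_one, ← mulVec_smul, ← Pi.single_smul', smul_eq_mul,
    mul_one]

lemma exists_eq_of_mulVec_eq_smul (hU : Uᵀ * U = 1) {w : ι → K} (hw : w ≠ 0) {c : K}
    (h : (Uᵀ * diagonal θ * U) *ᵥ w = c • w) : ∃ i, c = θ i := by
  have hdiag : diagonal θ *ᵥ (U *ᵥ w) = c • (U *ᵥ w) := by
    rw [← mulVec_smul, ← h, mulVec_mulVec, mulVec_mulVec, ← Matrix.mul_assoc, ← Matrix.mul_assoc,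
      mul_eq_one_comm.mp hU, Matrix.one_mul]
  obtain ⟨i, hi⟩ : ∃ i, (U *ᵥ w) i ≠ 0 := by
    by_contra! h0
    apply hw
    rw [← one_mulVec w, ← hU, ← mulVec_mulVec, (funext h0 : U *ᵥ w = 0), mulVec_zero]
  exact ⟨i, mul_right_cancel₀ hi (by simpa [mulVec_diagonal] using (congrFun hdiag i).symm)⟩

lemma diagonal_mul_mul_diagonal_mulVec_eq_smul_iff {σ : ι → K} (hσ : ∀ i, σ i ≠ 0)
    (p : Matrix ι ι K) (u : ι → K) (c : K) :
    (diagonal σ * p * diagonal σ) *ᵥ u = c • u ↔ p *ᵥ (σ * u) = c • (σ⁻¹ * u) := by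
  have hdiag : ∀ v : ι → K, diagonal σ *ᵥ v = σ * v := fun v => funext (mulVec_diagonal σ v)
  rw [← mulVec_mulVec, ← mulVec_mulVec, hdiag, hdiag, funext_iff, funext_iff]
  refine forall_congr' fun i => ?_
  simp only [Pi.smul_apply, Pi.mul_apply, Pi.inv_apply, smul_eq_mul]
  rw [mul_left_comm c, eq_inv_mul_iff_mul_eq₀ (hσ i)]

end Spectral

noncomputable section StepFunction

variable {α ι : Type*} [Fintype ι] {B : ι → Set α}

def stepFun (B : ι → Set α) (a : ι → ℝ) (x : α) : ℝ := ∑ i, a i * (B i).indicator 1 x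

def stepKernel (B : ι → Set α) (p : Matrix ι ι ℝ) (x y : α) : ℝ :=
  ∑ i, ∑ j, p i j * (B i).indicator 1 x * (B j).indicator 1 y

lemma indicator_one_mul_apply (s : Set α) (g : α → ℝ) (x : α) :
    s.indicator 1 x * g x = s.indicator g x := by
  simpa using (indicator_mul_left s 1 g).symm

lemma stepKernel_apply (p : Matrix ι ι ℝ) (x y : α) :
    stepKernel B p x y = ∑ i, (B i).indicator 1 x * stepFun B (fun j => p i j) y := by
  simp only [stepKernel, stepFun, Finset.mul_sum]
  exact Finset.sum_congr rfl fun i _ => Finset.sum_congr rfl fun j _ => by ring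

lemma stepFun_smul (c : ℝ) (a : ι → ℝ) (x : α) : stepFun B (c • a) x = c * stepFun B a x := by
  simp only [stepFun, Finset.mul_sum, Pi.smul_apply, smul_eq_mul, mul_assoc]

lemma stepFun_eq_of_mem (hB : Pairwise (Disjoint on B)) (a : ι → ℝ) {j : ι} {x : α}
    (hx : x ∈ B j) : stepFun B a x = a j := by
  rw [stepFun, Finset.sum_eq_single j]
  · simp [hx]
  · intro i _ hij
    simp [indicator_of_notMem ((hB hij).notMem_of_mem_right hx)]
  · simp

variable [MeasurableSpace α] {μ : Measure α}

lemma integrable_stepFun_mul (hBm : ∀ i, MeasurableSet (B i))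
    (a : ι → ℝ) {g : α → ℝ} (hg : Integrable g μ) :
    Integrable (fun x => stepFun B a x * g x) μ := by
  simp only [stepFun, Finset.sum_mul, mul_assoc, indicator_one_mul_apply]
  exact integrable_finsetSum _ fun i _ => (hg.indicator (hBm i)).const_mul _

lemma integral_stepFun_mul (hBm : ∀ i, MeasurableSet (B i))
    (a : ι → ℝ) {g : α → ℝ} (hg : Integrable g μ) :
    ∫ x, stepFun B a x * g x ∂μ = ∑ i, a i * ∫ x in B i, g x ∂μ := by
  simp only [stepFun, Finset.sum_mul, mul_assoc, indicator_one_mul_apply]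
  rw [integral_finsetSum _ fun i _ => (hg.indicator (hBm i)).const_mul _]
  simp only [integral_const_mul, integral_indicator (hBm _)]

lemma integral_stepKernel_mul (hBm : ∀ i, MeasurableSet (B i))
    (p : Matrix ι ι ℝ) {g : α → ℝ} (hg : Integrable g μ) (x : α) :
    ∫ y, stepKernel B p x y * g y ∂μ = stepFun B (p *ᵥ fun j => ∫ y in B j, g y ∂μ) x := by
  simp only [stepKernel_apply, Finset.sum_mul, mul_assoc]
  rw [integral_finsetSum _ fun i _ => (integrable_stepFun_mul hBm _ hg).const_mul _]
  simp only [integral_const_mul, integral_stepFun_mul hBm _ hg]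
  simp only [stepFun, mulVec, dotProduct, mul_comm]

lemma setIntegral_stepFun (hBm : ∀ i, MeasurableSet (B i))
    (hB : Pairwise (Disjoint on B)) (a : ι → ℝ) (j : ι) :
    ∫ x in B j, stepFun B a x ∂μ = a j * μ.real (B j) := by
  rw [setIntegral_congr_fun (hBm j) fun x hx => stepFun_eq_of_mem hB a hx, setIntegral_const,
    smul_eq_mul, mul_comm]

lemma integrable_stepFun (hBm : ∀ i, MeasurableSet (B i))
    (hfin : ∀ i, μ (B i) ≠ ⊤) (a : ι → ℝ) : Integrable (stepFun B a) μ := by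
  refine integrable_finsetSum _ fun i _ => Integrable.const_mul ?_ _
  exact (integrable_indicator_iff (hBm i)).2 (integrableOn_const (hfin i))

lemma integral_stepFun_mul_stepFun (hBm : ∀ i, MeasurableSet (B i))
    (hB : Pairwise (Disjoint on B)) (hfin : ∀ i, μ (B i) ≠ ⊤)
    (a c : ι → ℝ) :
    ∫ x, stepFun B a x * stepFun B c x ∂μ = ∑ i, a i * c i * μ.real (B i) := by
  rw [integral_stepFun_mul hBm a (integrable_stepFun hBm hfin c)]
  simp only [setIntegral_stepFun hBm hB, mul_assoc]

lemma exists_mulVec_eq_of_eigenfunction (hBm : ∀ i, MeasurableSet (B i))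
    (hB : Pairwise (Disjoint on B)) (p : Matrix ι ι ℝ)
    {g : α → ℝ} (hg : Integrable g μ) (hg0 : ¬ g =ᵐ[μ] 0) {c : ℝ} (hc : c ≠ 0)
    (heig : ∀ᵐ x ∂μ, ∫ y, stepKernel B p x y * g y ∂μ = c * g x) :
    ∃ v ≠ 0, ∀ i, μ.real (B i) * (p *ᵥ v) i = c * v i := by
  set v : ι → ℝ := fun j => ∫ y in B j, g y ∂μ
  have heig' : ∀ᵐ x ∂μ, stepFun B (p *ᵥ v) x = c * g x := by
    filter_upwards [heig] with x hx
    rwa [← integral_stepKernel_mul hBm p hg]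
  refine ⟨v, fun hv => hg0 ?_, fun i => ?_⟩
  · filter_upwards [heig'] with x hx
    simpa [hv, stepFun, hc] using hx.symm
  · calc μ.real (B i) * (p *ᵥ v) i = ∫ x in B i, stepFun B (p *ᵥ v) x ∂μ := by
          rw [setIntegral_stepFun hBm hB, mul_comm]
      _ = ∫ x in B i, c * g x ∂μ := integral_congr_ae (ae_restrict_of_ae heig')
      _ = c * v i := integral_const_mul c _

lemma integral_stepFun_inv_mul_stepFun_inv {σ : ι → ℝ} (hBm : ∀ i, MeasurableSet (B i))
    (hB : Pairwise (Disjoint on B)) (hσ : ∀ i, σ i ≠ 0) (hμσ : ∀ i, μ.real (B i) = σ i * σ i)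
    (a b : ι → ℝ) :
    ∫ x, stepFun B (σ⁻¹ * a) x * stepFun B (σ⁻¹ * b) x ∂μ = a ⬝ᵥ b := by
  have hfin : ∀ i, μ (B i) ≠ ⊤ := fun i =>
    measure_ne_top_of_measureReal_ne_zero (by rw [hμσ]; exact mul_ne_zero (hσ i) (hσ i))
  rw [integral_stepFun_mul_stepFun hBm hB hfin]
  refine Finset.sum_congr rfl fun i _ => ?_
  simp only [Pi.mul_apply, Pi.inv_apply, hμσ]
  field_simp [hσ i]

lemma integral_stepKernel_mul_stepFun_inv [DecidableEq ι] {σ : ι → ℝ}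
    (hBm : ∀ i, MeasurableSet (B i))
    (hB : Pairwise (Disjoint on B)) (hσ : ∀ i, σ i ≠ 0) (hμσ : ∀ i, μ.real (B i) = σ i * σ i)
    {p : Matrix ι ι ℝ} {u : ι → ℝ} {c : ℝ} (hu : (diagonal σ * p * diagonal σ) *ᵥ u = c • u)
    (x : α) :
    ∫ y, stepKernel B p x y * stepFun B (σ⁻¹ * u) y ∂μ = c * stepFun B (σ⁻¹ * u) x := by
  have hfin : ∀ i, μ (B i) ≠ ⊤ := fun i =>
    measure_ne_top_of_measureReal_ne_zero (by rw [hμσ]; exact mul_ne_zero (hσ i) (hσ i))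
  have hv : (fun i => ∫ y in B i, stepFun B (σ⁻¹ * u) y ∂μ) = σ * u := by
    funext i
    rw [setIntegral_stepFun hBm hB, hμσ]
    simp only [Pi.mul_apply, Pi.inv_apply]
    field_simp [hσ i]
  rw [integral_stepKernel_mul hBm p (integrable_stepFun hBm hfin _), hv,
    (diagonal_mul_mul_diagonal_mulVec_eq_smul_iff hσ p u c).1 hu, stepFun_smul]

lemma exists_diagonal_mul_mul_diagonal_mulVec_eq_smul [DecidableEq ι] {σ : ι → ℝ}
    (hBm : ∀ i, MeasurableSet (B i))
    (hB : Pairwise (Disjoint on B)) (hσ : ∀ i, σ i ≠ 0) (hμσ : ∀ i, μ.real (B i) = σ i * σ i)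
    (p : Matrix ι ι ℝ) {g : α → ℝ} (hg : Integrable g μ) (hg0 : ¬ g =ᵐ[μ] 0) {c : ℝ} (hc : c ≠ 0)
    (heig : ∀ᵐ x ∂μ, ∫ y, stepKernel B p x y * g y ∂μ = c * g x) :
    ∃ w ≠ 0, (diagonal σ * p * diagonal σ) *ᵥ w = c • w := by
  obtain ⟨v, hv0, hv⟩ := exists_mulVec_eq_of_eigenfunction hBm hB p hg hg0 hc heig
  refine ⟨σ⁻¹ * v, fun h => hv0 (funext fun i => by simpa [hσ i] using congrFun h i), ?_⟩
  have hcancel : σ * (σ⁻¹ * v) = v := funext fun i => by simp [hσ i]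
  rw [diagonal_mul_mul_diagonal_mulVec_eq_smul_iff hσ, hcancel]
  funext i
  simp only [Pi.mul_apply, Pi.inv_apply, Pi.smul_apply, smul_eq_mul]
  field_simp [hσ i]
  rw [← hv, hμσ]
  ring

end StepFunction

theorem stmt7_general (k : ℕ) (p : Matrix (Fin k) (Fin k) ℝ)
    (B : Fin k → Set ℝ) (hBmeas : ∀ i, MeasurableSet (B i))
    (hBsub : ∀ i, B i ⊆ Icc (0:ℝ) 1)
    (hBdisj : ∀ i j, i ≠ j → Disjoint (B i) (B j))
    (β : Fin k → ℝ) (hβ : ∀ i, β i = (volume (B i)).toReal) (hβpos : ∀ i, 0 < β i)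
    (f : ℝ → ℝ → ℝ)
    (hf : ∀ x y, f x y = ∑ i, ∑ j, p i j * (B i).indicator 1 x * (B j).indicator 1 y)
    (ptld : Matrix (Fin k) (Fin k) ℝ)
    (hptld : ∀ i j, ptld i j = p i j * Real.sqrt (β i * β j))
    (θ : Fin k → ℝ)
    (U : Matrix (Fin k) (Fin k) ℝ) (hUorth : Uᵀ * U = 1)
    (hdec : ptld = Uᵀ * Matrix.diagonal θ * U)
    (s : Fin k → ℝ → ℝ)
    (hs : ∀ i, s i = fun x => (Real.sqrt (β i))⁻¹ * (B i).indicator 1 x)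
    (r : Fin k → ℝ → ℝ) (hr : ∀ j, r j = fun x => ∑ i, U j i * s i x) :
    (∀ j l, (∫ x in Icc (0:ℝ) 1, r j x * r l x) = if j = l then 1 else 0) ∧
    (∀ j x, (∫ y in Icc (0:ℝ) 1, f x y * r j y) = θ j * r j x) ∧
    (∀ (θ' : ℝ) (g : ℝ → ℝ), θ' ≠ 0 →
      Integrable g (volume.restrict (Icc (0:ℝ) 1)) →
      ¬ (g =ᵐ[volume.restrict (Icc (0:ℝ) 1)] 0) →
      (∀ x ∈ Icc (0:ℝ) 1, (∫ y in Icc (0:ℝ) 1, f x y * g y) = θ' * g x) →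
      ∃ i, θ' = θ i) := by
  set μ := volume.restrict (Icc (0:ℝ) 1)
  set σ : Fin k → ℝ := fun i => √(β i)
  have hσ : ∀ i, σ i ≠ 0 := fun i => (Real.sqrt_pos.2 (hβpos i)).ne'
  have hμσ : ∀ i, μ.real (B i) = σ i * σ i := fun i => by
    simp [μ, σ, Measure.real, Measure.restrict_apply (hBmeas i), inter_eq_left.2 (hBsub i), ← hβ,
      Real.mul_self_sqrt (hβpos i).le]
  have hdisj : Pairwise (Disjoint on B) := fun i j h => hBdisj i j h
  have hf' : f = stepKernel B p := funext₂ hf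
  have hr' : ∀ j, r j = stepFun B (σ⁻¹ * U j) := fun j => by
    funext x
    simp only [hr, hs, stepFun, Pi.mul_apply, Pi.inv_apply, σ]
    exact Finset.sum_congr rfl fun i _ => by ring
  have hptld' : ptld = diagonal σ * p * diagonal σ := by
    ext i j
    simp [hptld, σ, diagonal_mul, mul_diagonal, Real.sqrt_mul (hβpos i).le]
    ring
  have hUUt : U * Uᵀ = 1 := mul_eq_one_comm.mp hUorth
  refine ⟨fun j l => ?_, fun j x => ?_, fun θ' g hθ' hg hg0 heig => ?_⟩
  · rw [hr', hr', integral_stepFun_inv_mul_stepFun_inv hBmeas hdisj hσ hμσ, ← one_apply, ← hUUt]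
    rfl
  · rw [hf', hr']
    exact integral_stepKernel_mul_stepFun_inv hBmeas hdisj hσ hμσ
      (hptld' ▸ hdec ▸ mulVec_row_eq_smul hUUt j) x
  · rw [hf'] at heig
    obtain ⟨w, hw0, hw⟩ := exists_diagonal_mul_mul_diagonal_mulVec_eq_smul hBmeas hdisj hσ hμσ p hg
      hg0 hθ' ((ae_restrict_iff' measurableSet_Icc).2 (ae_of_all _ heig))
    exact exists_eq_of_mulVec_eq_smul hUorth hw0 (hdec ▸ hptld' ▸ hw)

theorem stmt7 (k : ℕ) (p : Matrix (Fin k) (Fin k) ℝ) (hsym : p.IsSymm) (hpd : p.PosDef)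
    (B : Fin k → Set ℝ) (hBmeas : ∀ i, MeasurableSet (B i))
    (hBsub : ∀ i, B i ⊆ Icc (0:ℝ) 1)
    (hBdisj : ∀ i j, i ≠ j → Disjoint (B i) (B j))
    (β : Fin k → ℝ) (hβ : ∀ i, β i = (volume (B i)).toReal) (hβpos : ∀ i, 0 < β i)
    (f : ℝ → ℝ → ℝ)
    (hf : ∀ x y, f x y = ∑ i, ∑ j, p i j * (B i).indicator 1 x * (B j).indicator 1 y)
    (ptld : Matrix (Fin k) (Fin k) ℝ)
    (hptld : ∀ i j, ptld i j = p i j * Real.sqrt (β i * β j))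
    (θ : Fin k → ℝ) (hθpos : ∀ i, 0 < θ i) (hθmono : Antitone θ)
    (U : Matrix (Fin k) (Fin k) ℝ) (hUorth : Uᵀ * U = 1)
    (hdec : ptld = Uᵀ * Matrix.diagonal θ * U)
    (s : Fin k → ℝ → ℝ)
    (hs : ∀ i, s i = fun x => (Real.sqrt (β i))⁻¹ * (B i).indicator 1 x)
    (r : Fin k → ℝ → ℝ) (hr : ∀ j, r j = fun x => ∑ i, U j i * s i x) :
    (∀ j l, (∫ x in Icc (0:ℝ) 1, r j x * r l x) = if j = l then 1 else 0) ∧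
    (∀ j x, (∫ y in Icc (0:ℝ) 1, f x y * r j y) = θ j * r j x) ∧
    (∀ (θ' : ℝ) (g : ℝ → ℝ), θ' ≠ 0 →
      Integrable g (volume.restrict (Icc (0:ℝ) 1)) →
      ¬ (g =ᵐ[volume.restrict (Icc (0:ℝ) 1)] 0) →
      (∀ x ∈ Icc (0:ℝ) 1, (∫ y in Icc (0:ℝ) 1, f x y * g y) = θ' * g x) →
      ∃ i, θ' = θ i) :=
  stmt7_general k p B hBmeas hBsub hBdisj β hβ hβpos f hf ptld hptld θ U hUorth hdec s hs r hr
end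

section
/- Let W be an N×N real symmetric matrix, μ ∈ ℝ with |μ| > ‖W‖ (operator norm), and let e₁,…,e_k ∈ ℝ^N and θ₁,…,θ_k > 0, c > 0 be given. Suppose v ∈ ℝ^N satisfies μ v = W v + c Σ_{l=1}^k θ_l (e_l'v) e_l. Define u ∈ ℝ^k by u(j) = √θⱼ (eⱼ'v), and the k×k matrix V by V(j,l) = c √(θⱼ θ_l) eⱼ'(I − μ^{-1} W)^{-1} e_l. Then V u = μ u. Consequently, if u ≠ 0, then μ is an eigenvalue of the k×k matrix V. -/
/-!
Rearranging the eigenvalue equation gives `(1 - μ⁻¹ W) (μ v) = c ∑ₗ θₗ (eₗ ⬝ v) eₗ`. Since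
`|μ| > ‖W‖`, `μ` lies outside the spectrum of `W`, so `1 - μ⁻¹ W` can be inverted:
`μ v = c (1 - μ⁻¹ W)⁻¹ ∑ₗ θₗ (eₗ ⬝ v) eₗ`. Pairing with `eⱼ` and multiplying by `√θⱼ` turns
this into `(V u)ⱼ = μ uⱼ`, because `√(θⱼ θₗ) √θₗ = √θⱼ θₗ`.
-/

open Matrix

theorem Matrix.isUnit_one_sub_inv_smul_of_norm_lt {n : Type*} [Fintype n] [DecidableEq n]
    {W : Matrix n n ℝ} {μ : ℝ} (h : ‖toEuclideanCLM (𝕜 := ℝ) W‖ < |μ|) :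
    IsUnit (1 - μ⁻¹ • W) := by
  have hμ : μ ≠ 0 := abs_pos.mp ((norm_nonneg _).trans_lt h)
  have hnotMem : μ ∉ spectrum ℝ W := by
    rw [← AlgEquiv.spectrum_eq (toEuclideanCLM (n := n) (𝕜 := ℝ)).toAlgEquiv W]
    intro hmem
    have hle := (spectrum.norm_le_norm_mul_of_mem hmem).trans
      (mul_le_of_le_one_right (norm_nonneg _) ContinuousLinearMap.norm_id_le)
    exact (hle.trans_lt h).false
  rw [spectrum.notMem_iff, Algebra.algebraMap_eq_smul_one] at hnotMem
  simpa [Units.smul_def] using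
    (IsUnit.smul_sub_iff_sub_inv_smul (Units.mk0 μ hμ) W).mp hnotMem

theorem Matrix.inv_mulVec_eq_smul_of_smul_eq_mulVec_add {K n : Type*} [Field K] [Fintype n]
    [DecidableEq n] {W : Matrix n n K} {μ : K} (hμ : μ ≠ 0) (hA : IsUnit (1 - μ⁻¹ • W))
    {v w : n → K} (hv : μ • v = W *ᵥ v + w) :
    (1 - μ⁻¹ • W)⁻¹ *ᵥ w = μ • v := by
  have hAv : (1 - μ⁻¹ • W) *ᵥ (μ • v) = w := by
    rw [sub_mulVec, one_mulVec, smul_mulVec, mulVec_smul, smul_smul, inv_mul_cancel₀ hμ,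
      one_smul, hv, add_sub_cancel_left]
  rw [← hAv, mulVec_mulVec, nonsing_inv_mul _ ((isUnit_iff_isUnit_det _).mp hA), one_mulVec]

theorem Matrix.sqrt_weighted_compression_mulVec {ι n : Type*} [Fintype ι] [Fintype n]
    (B : Matrix n n ℝ) (e : ι → n → ℝ) {θ : ι → ℝ} (hθ : ∀ l, 0 ≤ θ l) (c : ℝ) (v : n → ℝ) :
    of (fun j l ↦ c * √(θ j * θ l) * (e j ⬝ᵥ B *ᵥ e l)) *ᵥ (fun l ↦ √(θ l) * (e l ⬝ᵥ v)) =
      fun j ↦ √(θ j) * (e j ⬝ᵥ B *ᵥ (c • ∑ l, (θ l * (e l ⬝ᵥ v)) • e l)) := by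
  funext j
  rw [mulVec_smul, mulVec_sum, dotProduct_smul, dotProduct_sum, smul_eq_mul, Finset.mul_sum,
    Finset.mul_sum]
  refine Finset.sum_congr rfl fun l _ ↦ ?_
  dsimp only [of_apply]
  rw [mulVec_smul, dotProduct_smul, smul_eq_mul, Real.sqrt_mul' _ (hθ l)]
  linear_combination (c * √(θ j) * (e l ⬝ᵥ v) * (e j ⬝ᵥ B *ᵥ e l)) * Real.mul_self_sqrt (hθ l)

theorem Matrix.mem_spectrum_of_mulVec_eq_smul {K n : Type*} [Field K] [Fintype n]
    [DecidableEq n] {A : Matrix n n K} {μ : K} {u : n → K} (h : A *ᵥ u = μ • u) (hu : u ≠ 0) :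
    μ ∈ spectrum K A := by
  rw [← spectrum_toLin']
  exact (Module.End.hasEigenvalue_of_hasEigenvector
    ⟨Module.End.mem_eigenspace_iff.mpr (by simpa using h), hu⟩).mem_spectrum

theorem stmt14_general (N k : ℕ) (W : Matrix (Fin N) (Fin N) ℝ)
    (μ : ℝ)
    (hμ : ‖LinearMap.toContinuousLinearMap (Matrix.toEuclideanLin W)‖ < |μ|)
    (e : Fin k → Fin N → ℝ) (θ : Fin k → ℝ) (hθ : ∀ l, 0 < θ l) (c : ℝ)
    (v : Fin N → ℝ)
    (hv : μ • v = W.mulVec v + c • ∑ l, (θ l * (e l ⬝ᵥ v)) • e l)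
    (u : Fin k → ℝ) (hu : ∀ j, u j = Real.sqrt (θ j) * (e j ⬝ᵥ v))
    (V : Matrix (Fin k) (Fin k) ℝ)
    (hV : ∀ j l, V j l = c * Real.sqrt (θ j * θ l) * (e j ⬝ᵥ (1 - μ⁻¹ • W)⁻¹.mulVec (e l))) :
    V.mulVec u = μ • u ∧ (u ≠ 0 → μ ∈ spectrum ℝ V) := by
  have hμ0 : μ ≠ 0 := abs_pos.mp ((norm_nonneg _).trans_lt hμ)
  have hres := inv_mulVec_eq_smul_of_smul_eq_mulVec_add hμ0
    (isUnit_one_sub_inv_smul_of_norm_lt hμ) hv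
  have hVu : V *ᵥ u = μ • u := by
    obtain rfl : V = of fun j l ↦ c * √(θ j * θ l) * (e j ⬝ᵥ (1 - μ⁻¹ • W)⁻¹ *ᵥ e l) := ext hV
    obtain rfl : u = fun j ↦ √(θ j) * (e j ⬝ᵥ v) := funext hu
    rw [sqrt_weighted_compression_mulVec _ e (fun l ↦ (hθ l).le), hres]
    funext j
    rw [dotProduct_smul, smul_eq_mul, Pi.smul_apply, smul_eq_mul, mul_left_comm]
  exact ⟨hVu, mem_spectrum_of_mulVec_eq_smul hVu⟩

theorem stmt14 (N k : ℕ) (W : Matrix (Fin N) (Fin N) ℝ) (hW : W.IsSymm)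
    (μ : ℝ)
    (hμ : ‖LinearMap.toContinuousLinearMap (Matrix.toEuclideanLin W)‖ < |μ|)
    (e : Fin k → Fin N → ℝ) (θ : Fin k → ℝ) (hθ : ∀ l, 0 < θ l) (c : ℝ) (hc : 0 < c)
    (v : Fin N → ℝ)
    (hv : μ • v = W.mulVec v + c • ∑ l, (θ l * (e l ⬝ᵥ v)) • e l)
    (u : Fin k → ℝ) (hu : ∀ j, u j = Real.sqrt (θ j) * (e j ⬝ᵥ v))
    (V : Matrix (Fin k) (Fin k) ℝ)
    (hV : ∀ j l, V j l = c * Real.sqrt (θ j * θ l) * (e j ⬝ᵥ (1 - μ⁻¹ • W)⁻¹.mulVec (e l))) :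
    V.mulVec u = μ • u ∧ (u ≠ 0 → μ ∈ spectrum ℝ V) :=
  stmt14_general N k W μ hμ e θ hθ c v hv u hu V hV
end
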